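/- Given constants k1, k2, d1, d2, r1, r2 > 0 with r2*(1-k2) - d2*k2 ≠ 0 and r1*(1-k1) - d1*k1 ≠ 0, if x = (r2^2*(k1+k2-1) + r2*d2*(k1+k2)) / (r2*(1-k2) - d2*k2) and y = (r1^2*(k1+k2-1) + r1*d1*(k1+k2)) / (r1*(1-k1) - d1*k1), then k1 = ((r1/(r1+d1)) - (r1/(r1+y))*(r2/(r2+d2))) / (1 - (r2/(r2+x))*(r1/(r1+y))) and k2 = ((r2/(r2+d2)) - (r2/(r2+x))*(r1/(r1+d1))) / (1 - (r2/(r2+x))*(r1/(r1+y))), provided r1+y ≠ 0, r2+x ≠ 0, and 1 - (r2/(r2+x))*(r1/(r1+y)) ≠ 0. -/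

import Mathlib

/-!
With `a1 = r1 / (r1 + d1)` and `a2 = r2 / (r2 + d2)`, the effective distances are chosen so that
`q = r2 / (r2 + x)` and `p = r1 / (r1 + y)` satisfy `q k1 = a2 - k2` and `p k2 = a1 - k1`.
So `(k1, k2)` solves the linear system `k1 + p k2 = a1`, `q k1 + k2 = a2`, and the claimed
formulas are its Cramer solution.
-/

/-- `k'` is the capture probability of the sphere of radius `r` at distance `d` from the
transmitter, `k` that of the other sphere. -/
noncomputable def effectiveDistance (r d k k' : ℝ) : ℝ :=
  (r ^ 2 * (k + k' - 1) + r * d * (k + k')) / (r * (1 - k') - d * k')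

lemma add_effectiveDistance {r d k k' : ℝ} (hden : r * (1 - k') - d * k' ≠ 0) :
    r + effectiveDistance r d k k' = r * (r + d) * k / (r * (1 - k') - d * k') := by
  rw [effectiveDistance, add_div' _ _ _ hden]
  ring

lemma div_add_effectiveDistance_mul {r d k k' : ℝ} (hr : r ≠ 0) (hrd : r + d ≠ 0) (hk : k ≠ 0)
    (hden : r * (1 - k') - d * k' ≠ 0) :
    r / (r + effectiveDistance r d k k') * k = r / (r + d) - k' := by
  rw [add_effectiveDistance hden]
  field_simp
  ring

lemma eq_div_of_two_by_two_system {K : Type*} [Field K] {k₁ k₂ p q a₁ a₂ : K}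
    (h₁ : k₁ + p * k₂ = a₁) (h₂ : q * k₁ + k₂ = a₂) (hD : 1 - q * p ≠ 0) :
    k₁ = (a₁ - p * a₂) / (1 - q * p) ∧ k₂ = (a₂ - q * a₁) / (1 - q * p) := by
  subst h₁ h₂
  constructor <;> rw [eq_div_iff hD] <;> ring

theorem effective_distances_solve_fixed_point_general
    (k1 k2 d1 d2 r1 r2 x y : ℝ)
    (hk1 : 0 < k1) (hk2 : 0 < k2) (hd1 : 0 < d1) (hd2 : 0 < d2)
    (hr1 : 0 < r1) (hr2 : 0 < r2)
    (hden2 : r2 * (1 - k2) - d2 * k2 ≠ 0) (hden1 : r1 * (1 - k1) - d1 * k1 ≠ 0)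
    (hx : x = (r2 ^ 2 * (k1 + k2 - 1) + r2 * d2 * (k1 + k2)) / (r2 * (1 - k2) - d2 * k2))
    (hy : y = (r1 ^ 2 * (k1 + k2 - 1) + r1 * d1 * (k1 + k2)) / (r1 * (1 - k1) - d1 * k1))
    (hD : 1 - (r2 / (r2 + x)) * (r1 / (r1 + y)) ≠ 0) :
    k1 = ((r1 / (r1 + d1)) - (r1 / (r1 + y)) * (r2 / (r2 + d2))) /
        (1 - (r2 / (r2 + x)) * (r1 / (r1 + y))) ∧
    k2 = ((r2 / (r2 + d2)) - (r2 / (r2 + x)) * (r1 / (r1 + d1))) /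
        (1 - (r2 / (r2 + x)) * (r1 / (r1 + y))) := by
  have hq : r2 / (r2 + x) * k1 = r2 / (r2 + d2) - k2 := by
    rw [hx]
    exact div_add_effectiveDistance_mul hr2.ne' (by positivity) hk1.ne' hden2
  have hp : r1 / (r1 + y) * k2 = r1 / (r1 + d1) - k1 := by
    rw [hy, add_comm k1 k2]
    exact div_add_effectiveDistance_mul hr1.ne' (by positivity) hk2.ne' hden1
  exact eq_div_of_two_by_two_system (by linarith) (by linarith) hD

theorem effective_distances_solve_fixed_point
    (k1 k2 d1 d2 r1 r2 x y : ℝ)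
    (hk1 : 0 < k1) (hk2 : 0 < k2) (hd1 : 0 < d1) (hd2 : 0 < d2)
    (hr1 : 0 < r1) (hr2 : 0 < r2)
    (hden2 : r2 * (1 - k2) - d2 * k2 ≠ 0) (hden1 : r1 * (1 - k1) - d1 * k1 ≠ 0)
    (hx : x = (r2 ^ 2 * (k1 + k2 - 1) + r2 * d2 * (k1 + k2)) / (r2 * (1 - k2) - d2 * k2))
    (hy : y = (r1 ^ 2 * (k1 + k2 - 1) + r1 * d1 * (k1 + k2)) / (r1 * (1 - k1) - d1 * k1))
    (hry : r1 + y ≠ 0) (hrx : r2 + x ≠ 0)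
    (hD : 1 - (r2 / (r2 + x)) * (r1 / (r1 + y)) ≠ 0) :
    k1 = ((r1 / (r1 + d1)) - (r1 / (r1 + y)) * (r2 / (r2 + d2))) /
        (1 - (r2 / (r2 + x)) * (r1 / (r1 + y))) ∧
    k2 = ((r2 / (r2 + d2)) - (r2 / (r2 + x)) * (r1 / (r1 + d1))) /
        (1 - (r2 / (r2 + x)) * (r1 / (r1 + y))) :=
  effective_distances_solve_fixed_point_general k1 k2 d1 d2 r1 r2 x y hk1 hk2 hd1 hd2 hr1 hr2 hden2
    hden1 hx hy hD
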